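/- arXiv:math/0106239 — 4 statements merged into one kernel-verified Lean document; each statement's English description precedes it below -/
import Mathlib

section
/- Let k be a field, A := k[w,x,z][[y]] and B := k[w,x,1/x,z][[y]], with φ : A → B the coefficientwise localization map. Then there exists a prime ideal p of B with p ≠ (0) whose contraction φ⁻¹(p) along φ is the zero ideal of A. -/
/-- `A = k[w,x,z][[y]]`: power series in `y` over the polynomial ring `k[w,x,z]`. -/
abbrev A (k : Type*) [Field k] : Type _ := PowerSeries (MvPolynomial (Fin 3) k)

/-- `B = k[w,x,1/x,z][[y]]`: power series in `y` over the localization of `k[w,x,z]`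
away from `x`. -/
abbrev B (k : Type*) [Field k] : Type _ :=
  PowerSeries (Localization.Away (MvPolynomial.X 1 : MvPolynomial (Fin 3) k))

/-- The coefficientwise localization map `φ : A → B`. -/
noncomputable def φ (k : Type*) [Field k] : A k →+* B k :=
  PowerSeries.map (algebraMap (MvPolynomial (Fin 3) k)
    (Localization.Away (MvPolynomial.X 1 : MvPolynomial (Fin 3) k)))

/-!
Let `s = ∑ₘ x^(-c m) y^(a m)` with `a m = 2^(m²)` and `c m = 2^(m³)`. Substituting `w ↦ s` is a
ring map `Ψ` from `B` to the domain `k[x^±1, z^±1]⟦y⟧`; its kernel is a prime containing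
`w - s ≠ 0`, and it meets `A` only in `0`. For nonzero `g ∈ A`, let `t` be its `y`-order and
`w^d x^α z^β` a monomial of its `t`-th coefficient. Weigh `x^e y^q` by `q c r + e a r`: this
vanishes on `x^(-c r) y^(a r)`, is at least `c r - c (r-1) a r` on the earlier terms of `s`, and
the later terms do not matter below degree `a (r+1)`. As the coefficients of `g` have no negative
powers of `x`, for large `r` the monomial `x^(α - d c r) z^β y^(t + d a r)` of `Ψ g`, of weight
`α a r`, only receives the chosen monomial with `w^d` replaced by `(x^(-c r) y^(a r))^d`.
-/

open Finset PowerSeries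
open AddMonoidAlgebra (single)

namespace PowerSeries

section eval₂X

variable {R T : Type*} [CommRing R] [CommRing T]

/-- The ring hom `∑ rₙ Xⁿ ↦ ∑ e(rₙ) Xⁿ`, i.e. `eval₂ e X` for the discrete topology on `R`. -/
noncomputable def eval₂X (e : R →+* T⟦X⟧) : R⟦X⟧ →+* T⟦X⟧ :=
  letI : UniformSpace R := ⊥
  letI : UniformSpace T := ⊥
  haveI : DiscreteTopology R := ⟨rfl⟩
  haveI : DiscreteTopology T := ⟨rfl⟩
  open WithPiTopology in eval₂Hom (φ := e) continuous_of_discreteTopology HasEval.X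

open WithPiTopology in
theorem eval₂X_coe (e : R →+* T⟦X⟧) (p : Polynomial R) : eval₂X e p = p.eval₂ e X := by
  let _ : UniformSpace R := ⊥
  let _ : UniformSpace T := ⊥
  have : DiscreteTopology R := ⟨rfl⟩
  have : DiscreteTopology T := ⟨rfl⟩
  rw [eval₂X, coe_eval₂Hom, eval₂_coe]

theorem eval₂X_C (e : R →+* T⟦X⟧) (r : R) : eval₂X e (C r) = e r := by
  simpa using eval₂X_coe e (Polynomial.C r)

theorem eval₂X_X (e : R →+* T⟦X⟧) : eval₂X e X = X := by
  simpa using eval₂X_coe e Polynomial.X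

theorem coeff_eval₂X (e : R →+* T⟦X⟧) (f : R⟦X⟧) (n : ℕ) :
    coeff n (eval₂X e f) = ∑ p ∈ antidiagonal n, coeff p.2 (e (coeff p.1 f)) := by
  conv_lhs => rw [eq_shift_mul_X_pow_add_trunc (n + 1) f]
  rw [map_add, map_mul, map_pow, eval₂X_X, map_add, coeff_mul_X_pow', if_neg (by omega),
    zero_add, eval₂X_coe, eval₂_trunc_eq_sum_range, map_sum,
    Nat.sum_antidiagonal_eq_sum_range_succ (fun i j => coeff j (e (coeff i f)))]
  refine sum_congr rfl fun i hi => ?_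
  rw [coeff_mul_X_pow', if_pos (by simp at hi; omega)]

theorem eval₂X_comp_map {R' : Type*} [CommRing R'] (e : R →+* T⟦X⟧) (f : R' →+* R) :
    (eval₂X e).comp (map f) = eval₂X (e.comp f) := by
  ext g n
  simp [coeff_eval₂X]

theorem eval₂X_eq_of_coeff {e : R →+* T⟦X⟧} {f : R⟦X⟧} {g : T⟦X⟧}
    (h : ∀ n, e (coeff n f) = C (coeff n g)) : eval₂X e f = g := by
  ext n
  rw [coeff_eval₂X, sum_eq_single (n, 0)]
  · simp [h]
  · rintro ⟨i, j⟩ hij hne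
    have hj : j ≠ 0 := by rintro rfl; simp_all
    simp [h, coeff_C, hj]
  · simp

end eval₂X

section Lacunary

variable {R : Type*} [CommRing R] (a c : ℕ → ℕ)

noncomputable def lacunaryPartialSum (u : R) (r : ℕ) : R⟦X⟧ :=
  ∑ m ∈ range (r + 1), C (u ^ c m) * X ^ a m

/-- The series `∑ₘ u ^ c m * X ^ a m`; it is only meaningful for `a` strictly increasing. -/
noncomputable def lacunarySeries (u : R) : R⟦X⟧ :=
  mk fun n => coeff n (lacunaryPartialSum a c u n)

variable {a c}

theorem coeff_lacunaryPartialSum (u : R) (r n : ℕ) :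
    coeff n (lacunaryPartialSum a c u r)
      = ∑ m ∈ range (r + 1), if n = a m then u ^ c m else 0 := by
  simp only [lacunaryPartialSum, map_sum, coeff_C_mul_X_pow]

theorem coeff_lacunaryPartialSum_eq (ha : StrictMono a) (u : R) {r r' n : ℕ} (h : r ≤ r')
    (hn : n < a (r + 1)) :
    coeff n (lacunaryPartialSum a c u r') = coeff n (lacunaryPartialSum a c u r) := by
  rw [coeff_lacunaryPartialSum, coeff_lacunaryPartialSum]
  refine (sum_subset (range_subset_range.2 (by omega)) fun m _ hm => if_neg ?_).symm
  have : a (r + 1) ≤ a m := ha.monotone (by simpa using hm)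
  omega

theorem X_pow_dvd_lacunarySeries_sub (ha : StrictMono a) (u : R) (r : ℕ) :
    X ^ a (r + 1) ∣ lacunarySeries a c u - lacunaryPartialSum a c u r := by
  refine X_pow_dvd_iff.2 fun n hn => ?_
  rw [map_sub, lacunarySeries, coeff_mk, sub_eq_zero]
  rcases le_total n r with h | h
  · exact (coeff_lacunaryPartialSum_eq ha u h (ha.id_le (n + 1))).symm
  · exact coeff_lacunaryPartialSum_eq ha u h hn

theorem coeff_zero_lacunarySeries (ha0 : 0 < a 0) (u : R) : coeff 0 (lacunarySeries a c u) = 0 := by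
  simp [lacunarySeries, coeff_lacunaryPartialSum, ha0.ne]

theorem map_lacunarySeries {S : Type*} [CommRing S] (f : R →+* S) (u : R) :
    map f (lacunarySeries a c u) = lacunarySeries a c (f u) := by
  ext n
  simp [lacunarySeries, coeff_lacunaryPartialSum, apply_ite f]

theorem coeff_lacunarySeries_mul (ha : StrictMono a) (u : R) (g : R⟦X⟧) {r q : ℕ}
    (hq : q < a (r + 1)) :
    coeff q (lacunarySeries a c u * g)
      = ∑ m ∈ range (r + 1), if a m ≤ q then u ^ c m * coeff (q - a m) g else 0 := by
  have htrunc : coeff q (lacunarySeries a c u * g) = coeff q (lacunaryPartialSum a c u r * g) := by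
    rw [← sub_eq_zero, ← map_sub, ← sub_mul]
    exact X_pow_dvd_iff.1 ((X_pow_dvd_lacunarySeries_sub ha u r).mul_right g) q hq
  rw [htrunc, lacunaryPartialSum, sum_mul, map_sum]
  refine sum_congr rfl fun m _ => ?_
  rw [mul_assoc, coeff_C_mul, coeff_X_pow_mul']
  split_ifs <;> simp

end Lacunary

section LaurentWeight

variable {K : Type*} [CommRing K] {a c : ℕ → ℕ}

theorem coeff_lacunarySeries_mul_apply (ha : StrictMono a)
    (g : (AddMonoidAlgebra K (ℤ × ℤ))⟦X⟧) {r q : ℕ} (hq : q < a (r + 1)) (e : ℤ × ℤ) :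
    (coeff q (lacunarySeries a c (single (-1, 0) 1) * g)).coeff e
      = ∑ m ∈ range (r + 1),
          if a m ≤ q then (coeff (q - a m) g).coeff (e + ((c m : ℤ), 0)) else 0 := by
  rw [coeff_lacunarySeries_mul ha _ g hq, AddMonoidAlgebra.coeff_sum, Finsupp.finsetSum_apply]
  refine sum_congr rfl fun m _ => ?_
  split_ifs
  · rw [AddMonoidAlgebra.single_pow, one_pow, AddMonoidAlgebra.coeff_single_mul_apply, one_mul]
    congr 1
    ext <;> simp [add_comm]
  · simp

/-- `q * c r + e.1 * a r` is the weight of `x ^ e.1 * y ^ q`. It vanishes on `x^(-c r) y^(a r)` and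
is at least `G` on the earlier terms of the series, so below weight `G` only the powers of
`x^(-c r) y^(a r)` occur. -/
theorem coeff_lacunarySeries_pow_apply (ha : StrictMono a) {r : ℕ} {G : ℤ} (hG0 : 0 ≤ G)
    (hG : ∀ m < r, G ≤ a m * c r - c m * a r) (n : ℕ) {q : ℕ} (hq : q < a (r + 1))
    {e : ℤ × ℤ} (he : q * c r + e.1 * a r < G) :
    (coeff q (lacunarySeries a c (single (-1, 0) 1 : AddMonoidAlgebra K (ℤ × ℤ)) ^ n)).coeff e
      = if e = (-(n * c r : ℤ), 0) ∧ q = n * a r then 1 else 0 := by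
  induction n generalizing q e with
  | zero =>
    by_cases hq0 : q = 0 <;>
      simp [coeff_one, AddMonoidAlgebra.one_def, hq0, Finsupp.single_apply, eq_comm,
        Prod.mk_zero_zero]
  | succ n ih =>
    rw [pow_succ', coeff_lacunarySeries_mul_apply ha _ hq, sum_eq_single r]
    · by_cases hr : a r ≤ q
      · have hω : ((q - a r : ℕ) : ℤ) * c r + (e + ((c r : ℤ), 0)).1 * a r < G := by
          push_cast [Nat.cast_sub hr, Prod.fst_add]
          linear_combination he
        rw [if_pos hr, ih (by omega) hω]
        refine if_congr ?_ rfl rfl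
        rw [Prod.ext_iff, Prod.ext_iff, add_mul, one_mul]
        push_cast [Prod.fst_add, Prod.snd_add]
        constructor <;> rintro ⟨⟨h1, h2⟩, h3⟩ <;>
          exact ⟨⟨by linarith, by simpa using h2⟩, by omega⟩
      · rw [if_neg hr, if_neg]
        rintro ⟨-, hq'⟩
        rw [hq', add_mul, one_mul] at hr
        omega
    · intro m hm hmr
      have hmr' : m < r := by simp at hm; omega
      split_ifs with hmq
      · have hδ := hG m hmr'
        have hω : ((q - a m : ℕ) : ℤ) * c r + (e + ((c m : ℤ), 0)).1 * a r < 0 := by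
          push_cast [Nat.cast_sub hmq, Prod.fst_add]
          linear_combination he + hδ
        rw [ih (by omega) (hω.trans_le hG0), if_neg]
        rintro ⟨he', hq'⟩
        rw [he', hq'] at hω
        push_cast at hω
        linarith
      · rfl
    · simp

end LaurentWeight

end PowerSeries

namespace LyingOverZero

section Extraction

variable {K : Type*} [CommRing K] (a c : ℕ → ℕ)

/-- `AddMonoidAlgebra K (ℤ × ℤ)` stands for `K[x^±1, z^±1]`; this is `w ↦ ∑ₘ x^(-c m) y^(a m)`,
`x ↦ x`, `z ↦ z`. -/
noncomputable def evalLacunary :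
    MvPolynomial (Fin 3) K →+* (AddMonoidAlgebra K (ℤ × ℤ))⟦X⟧ :=
  MvPolynomial.eval₂Hom (C.comp (algebraMap K _))
    ![lacunarySeries a c (single (-1, 0) 1), C (single (1, 0) 1), C (single (0, 1) 1)]

variable {a c}

@[simp]
theorem evalLacunary_X_zero :
    evalLacunary a c (MvPolynomial.X 0 : MvPolynomial (Fin 3) K)
      = lacunarySeries a c (single (-1, 0) 1) := by
  simp [evalLacunary]

@[simp]
theorem evalLacunary_X_one :
    evalLacunary a c (MvPolynomial.X 1 : MvPolynomial (Fin 3) K) = C (single (1, 0) 1) := by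
  simp [evalLacunary]

theorem coeff_evalLacunary_apply (P : MvPolynomial (Fin 3) K) (q : ℕ) (ν : ℤ × ℤ) :
    (coeff q (evalLacunary a c P)).coeff ν = ∑ μ ∈ P.support, MvPolynomial.coeff μ P *
      (coeff q (lacunarySeries a c (single (-1, 0) 1 : AddMonoidAlgebra K (ℤ × ℤ)) ^ μ 0)
        ).coeff (ν - ((μ 1 : ℤ), (μ 2 : ℤ))) := by
  conv_lhs => rw [P.as_sum]
  rw [map_sum, map_sum, AddMonoidAlgebra.coeff_sum, Finsupp.finsetSum_apply]
  refine sum_congr rfl fun μ _ => ?_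
  have hmon : evalLacunary a c (MvPolynomial.monomial μ (MvPolynomial.coeff μ P))
      = C (single ((μ 1 : ℤ), (μ 2 : ℤ)) (MvPolynomial.coeff μ P))
        * lacunarySeries a c (single (-1, 0) 1) ^ μ 0 := by
    rw [evalLacunary, MvPolynomial.eval₂Hom_monomial, Finsupp.prod_pow, Fin.prod_univ_three]
    simp only [Matrix.cons_val_zero, Matrix.cons_val_one, Matrix.cons_val_two, Matrix.head_cons,
      Matrix.tail_cons, ← map_pow, AddMonoidAlgebra.single_pow, one_pow]
    have hsingle : single ((μ 1 : ℤ), (μ 2 : ℤ)) (MvPolynomial.coeff μ P) =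
        algebraMap K _ (MvPolynomial.coeff μ P) * single (μ 1 • ((1 : ℤ), (0 : ℤ))) 1 *
          single (μ 2 • ((0 : ℤ), (1 : ℤ))) 1 := by
      simp [AddMonoidAlgebra.single_mul_single, AddMonoidAlgebra.coe_algebraMap]
    rw [hsingle, map_mul, map_mul, RingHom.comp_apply]
    ring
  rw [hmon, coeff_C_mul, AddMonoidAlgebra.coeff_single_mul_apply, neg_add_eq_sub]

theorem gap_le_weight (ha : StrictMono a) (ha0 : 0 < a 0) (hc : Monotone c) {n m : ℕ}
    (hm : m < n + 1) :
    (c (n + 1) - c n * a (n + 1) : ℤ) ≤ a m * c (n + 1) - c m * a (n + 1) := by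
  have ham : (1 : ℤ) ≤ a m := by exact_mod_cast ha0.trans_le (ha.monotone (Nat.zero_le m))
  have hcm : (c m : ℤ) ≤ c n := by exact_mod_cast hc (by omega : m ≤ n)
  nlinarith

theorem coeff_lacunarySeries_pow_apply_eq_ite (ha : StrictMono a) (ha0 : 0 < a 0)
    (hc : Monotone c) {n t p q : ℕ} (μ μ' : Fin 3 →₀ ℕ) (hpq : p + q = t + μ 0 * a (n + 1))
    (htp : t ≤ p) (h1 : t + μ 0 * a (n + 1) < a (n + 2))
    (h2 : (μ 1 + c n) * a (n + 1) < c (n + 1)) :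
    (coeff q (lacunarySeries a c (single (-1, 0) 1 : AddMonoidAlgebra K (ℤ × ℤ)) ^ μ' 0)
        ).coeff (((μ 1 : ℤ) - μ 0 * c (n + 1), (μ 2 : ℤ)) - ((μ' 1 : ℤ), (μ' 2 : ℤ)))
      = if p = t ∧ μ' = μ then 1 else 0 := by
  have h2' : ((μ 1 + c n) * a (n + 1) : ℤ) < c (n + 1) := by exact_mod_cast h2
  have hq : (q : ℤ) = t + μ 0 * a (n + 1) - p := by omega
  have htp' : (t : ℤ) ≤ p := by exact_mod_cast htp
  have hc0 : (0 : ℤ) ≤ c (n + 1) := by positivity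
  have ha1 : (0 : ℤ) ≤ a (n + 1) := by positivity
  -- the target monomial has weight at most `μ 1 * a (n + 1)`
  have hweight : (q : ℤ) * c (n + 1)
      + (((μ 1 : ℤ) - μ 0 * c (n + 1), (μ 2 : ℤ)) - ((μ' 1 : ℤ), (μ' 2 : ℤ))).1 * a (n + 1)
      < c (n + 1) - c n * a (n + 1) := by
    simp only [Prod.fst_sub]
    rw [hq]
    nlinarith
  rw [coeff_lacunarySeries_pow_apply ha (by nlinarith) (fun _ => gap_le_weight ha ha0 hc) (μ' 0)
    (show q < a (n + 2) by omega) hweight]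
  refine if_congr ⟨fun ⟨he, hq'⟩ => ?_, ?_⟩ rfl rfl
  · simp only [Prod.ext_iff, Prod.fst_sub, Prod.snd_sub] at he
    obtain ⟨he1, he2⟩ := he
    have hq'' : (q : ℤ) = μ' 0 * a (n + 1) := by exact_mod_cast hq'
    -- the contribution of `p` and `μ'` has weight `0`, which leaves no room for `p > t`
    have hshift : ((μ' 1 : ℤ) - μ 1) * a (n + 1) = (t - p) * c (n + 1) := by
      linear_combination (-(a (n + 1) : ℤ)) * he1 + (c (n + 1) : ℤ) * (hq - hq'')
    have hpt : p = t := by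
      by_contra hne
      have : (t : ℤ) + 1 ≤ p := by omega
      nlinarith
    subst hpt
    have hμ0 : μ' 0 = μ 0 :=
      Nat.eq_of_mul_eq_mul_right (ha0.trans_le (ha.monotone (Nat.zero_le (n + 1)))) (by omega)
    have hμ1 : μ' 1 = μ 1 := by
      rw [hμ0] at he1
      omega
    have hμ2 : μ' 2 = μ 2 := by omega
    refine ⟨rfl, Finsupp.ext fun i => ?_⟩
    fin_cases i <;> assumption
  · rintro ⟨rfl, rfl⟩
    refine ⟨?_, by omega⟩
    ext <;> simp

theorem coeff_coeff_evalLacunary_eq_ite (ha : StrictMono a) (ha0 : 0 < a 0) (hc : Monotone c)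
    {g : (MvPolynomial (Fin 3) K)⟦X⟧} {t : ℕ} (hlow : ∀ p < t, coeff p g = 0)
    (μ : Fin 3 →₀ ℕ) {n p q : ℕ} (hpq : p + q = t + μ 0 * a (n + 1))
    (h1 : t + μ 0 * a (n + 1) < a (n + 2)) (h2 : (μ 1 + c n) * a (n + 1) < c (n + 1)) :
    (coeff q (evalLacunary a c (coeff p g))).coeff ((μ 1 : ℤ) - μ 0 * c (n + 1), (μ 2 : ℤ))
      = if p = t then MvPolynomial.coeff μ (coeff t g) else 0 := by
  rcases lt_or_ge p t with hpt | htp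
  · simp [hlow p hpt, hpt.ne]
  rw [coeff_evalLacunary_apply]
  simp_rw [coeff_lacunarySeries_pow_apply_eq_ite ha ha0 hc μ _ hpq htp h1 h2, mul_ite, mul_one,
    mul_zero]
  split_ifs with hpt
  · subst hpt
    simp only [true_and]
    rw [sum_ite_eq']
    split_ifs with h
    · rfl
    · exact (MvPolynomial.notMem_support_iff.1 h).symm
  · simp [hpt]

theorem coeff_coeff_eval₂X_evalLacunary (ha : StrictMono a) (ha0 : 0 < a 0) (hc : Monotone c)
    {g : (MvPolynomial (Fin 3) K)⟦X⟧} {t : ℕ} (hlow : ∀ p < t, coeff p g = 0)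
    (μ : Fin 3 →₀ ℕ) {n : ℕ} (h1 : t + μ 0 * a (n + 1) < a (n + 2))
    (h2 : (μ 1 + c n) * a (n + 1) < c (n + 1)) :
    (coeff (t + μ 0 * a (n + 1)) (eval₂X (evalLacunary a c) g)).coeff
        ((μ 1 : ℤ) - μ 0 * c (n + 1), (μ 2 : ℤ))
      = MvPolynomial.coeff μ (coeff t g) := by
  rw [coeff_eval₂X, AddMonoidAlgebra.coeff_sum, Finsupp.finsetSum_apply,
    sum_congr rfl fun pq hpq =>
      coeff_coeff_evalLacunary_eq_ite ha ha0 hc hlow μ (mem_antidiagonal.1 hpq) h1 h2,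
    sum_eq_single (t, μ 0 * a (n + 1))]
  · simp
  · rintro ⟨p, q⟩ hpq hne
    rw [if_neg]
    rintro rfl
    exact hne (by simp_all)
  · simp

theorem eval₂X_evalLacunary_injective (ha : StrictMono a) (ha0 : 0 < a 0) (hc : Monotone c)
    (hgrowth : ∀ t d α : ℕ,
      ∃ n, t + d * a (n + 1) < a (n + 2) ∧ (α + c n) * a (n + 1) < c (n + 1)) :
    Function.Injective (eval₂X (evalLacunary (K := K) a c)) := by
  classical
  refine (injective_iff_map_eq_zero _).2 fun g hg => ?_
  by_contra hne
  have hex := exists_coeff_ne_zero_iff_ne_zero.2 hne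
  obtain ⟨μ, hμ⟩ := MvPolynomial.ne_zero_iff.1 (Nat.find_spec hex)
  obtain ⟨n, h1, h2⟩ := hgrowth (Nat.find hex) (μ 0) (μ 1)
  apply hμ
  rw [← coeff_coeff_eval₂X_evalLacunary ha ha0 hc (fun p hp => not_not.1 (Nat.find_min hex hp))
    μ h1 h2, hg]
  simp

end Extraction

section Growth

def yDeg (m : ℕ) : ℕ := 2 ^ (m * m)

def xPole (m : ℕ) : ℕ := 2 ^ (m * m * m)

theorem yDeg_strictMono : StrictMono yDeg := fun _ _ h =>
  Nat.pow_lt_pow_right one_lt_two (Nat.mul_self_lt_mul_self h)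

theorem xPole_monotone : Monotone xPole := fun _ _ h =>
  Nat.pow_le_pow_right two_pos (Nat.mul_le_mul (Nat.mul_self_le_mul_self h) h)

theorem exists_yDeg_xPole_gap (t d α : ℕ) :
    ∃ n, t + d * yDeg (n + 1) < yDeg (n + 2) ∧
      (α + xPole n) * yDeg (n + 1) < xPole (n + 1) := by
  refine ⟨t + d + α + 1, ?_, ?_⟩ <;> set n := t + d + α + 1 with hn
  · have hsplit : yDeg (n + 2) = 2 ^ (2 * n + 3) * yDeg (n + 1) := by
      rw [yDeg, yDeg, ← pow_add]; congr 1; ring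
    have hlt : t + d < 2 ^ (2 * n + 3) :=
      (show t + d < n by omega).trans
        (Nat.lt_two_pow_self.trans (Nat.pow_lt_pow_right one_lt_two (by omega)))
    have hpos : 0 < yDeg (n + 1) := by rw [yDeg]; positivity
    rw [hsplit]
    nlinarith
  · have hα : α ≤ xPole n :=
      (show α ≤ n by omega).trans (Nat.lt_two_pow_self.le.trans
        (Nat.pow_le_pow_right two_pos
          (Nat.le_mul_of_pos_left n (Nat.mul_pos (by omega) (by omega)))))
    calc (α + xPole n) * yDeg (n + 1) ≤ 2 ^ (n * n * n + 1 + (n + 1) * (n + 1)) := by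
          rw [pow_add, pow_add, pow_one, yDeg]
          gcongr
          rw [xPole] at hα ⊢
          omega
      _ < xPole (n + 1) := Nat.pow_lt_pow_right one_lt_two (by nlinarith)

end Growth

section Localization

variable (k : Type*) [Field k]

theorem isUnit_evalLacunary_X_one :
    IsUnit (evalLacunary yDeg xPole (MvPolynomial.X 1 : MvPolynomial (Fin 3) k)) := by
  refine IsUnit.of_mul_eq_one (C (single (-1, 0) 1)) ?_
  rw [evalLacunary_X_one, ← map_mul]
  simp [AddMonoidAlgebra.single_mul_single, Prod.mk_zero_zero, ← AddMonoidAlgebra.one_def]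

noncomputable def evalLoc :
    Localization.Away (MvPolynomial.X 1 : MvPolynomial (Fin 3) k) →+*
      (AddMonoidAlgebra k (ℤ × ℤ))⟦X⟧ :=
  IsLocalization.Away.lift _ (isUnit_evalLacunary_X_one k)

theorem evalLoc_invSelf :
    evalLoc k (IsLocalization.Away.invSelf (MvPolynomial.X 1 : MvPolynomial (Fin 3) k))
      = C (single (-1, 0) 1) := by
  refine (left_inv_eq_right_inv (a := C (single (1, 0) 1)) ?_ ?_).symm
  · rw [← map_mul]
    simp [AddMonoidAlgebra.single_mul_single, Prod.mk_zero_zero, ← AddMonoidAlgebra.one_def]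
  · have := congrArg (evalLoc k) (IsLocalization.Away.mul_invSelf
      (S := Localization.Away (MvPolynomial.X 1 : MvPolynomial (Fin 3) k))
      (MvPolynomial.X 1 : MvPolynomial (Fin 3) k))
    rwa [map_mul, map_one, evalLoc, IsLocalization.Away.lift_eq, evalLacunary_X_one] at this

noncomputable def xInvLacunary : B k :=
  lacunarySeries yDeg xPole
    (IsLocalization.Away.invSelf (MvPolynomial.X 1 : MvPolynomial (Fin 3) k))

theorem eval₂X_evalLoc_xInvLacunary :
    eval₂X (evalLoc k) (xInvLacunary k) = lacunarySeries yDeg xPole (single (-1, 0) 1) := by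
  refine eval₂X_eq_of_coeff fun n => ?_
  rw [← coeff_map, xInvLacunary, map_lacunarySeries, evalLoc_invSelf, ← map_lacunarySeries,
    coeff_map]

theorem eval₂X_evalLoc_comp_φ :
    (eval₂X (evalLoc k)).comp (φ k) = eval₂X (evalLacunary yDeg xPole) := by
  rw [φ, eval₂X_comp_map, evalLoc, IsLocalization.Away.lift_comp]

theorem C_X_zero_sub_xInvLacunary_mem_ker :
    (C (algebraMap (MvPolynomial (Fin 3) k) _ (MvPolynomial.X 0)) : B k) - xInvLacunary k ∈
      RingHom.ker (eval₂X (evalLoc k)) := by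
  rw [RingHom.mem_ker, map_sub, eval₂X_C, evalLoc, IsLocalization.Away.lift_eq,
    ← evalLoc, eval₂X_evalLoc_xInvLacunary, evalLacunary_X_zero, sub_self]

theorem C_X_zero_sub_xInvLacunary_ne_zero :
    (C (algebraMap (MvPolynomial (Fin 3) k) _ (MvPolynomial.X 0)) : B k) -
      xInvLacunary k ≠ 0 := by
  intro h
  have h0 := congrArg (coeff 0) h
  rw [map_sub, coeff_C, if_pos rfl, xInvLacunary, coeff_zero_lacunarySeries (by simp [yDeg]),
    sub_zero, map_zero] at h0
  exact MvPolynomial.X_ne_zero 0 (IsLocalization.injective _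
    (powers_le_nonZeroDivisors_of_noZeroDivisors (MvPolynomial.X_ne_zero 1))
    (h0.trans (map_zero _).symm))

end Localization

end LyingOverZero

open LyingOverZero

/-- There is a nonzero prime ideal of `B = k[w,x,1/x,z][[y]]` contracting to `(0)` in
`A = k[w,x,z][[y]]`. -/
theorem statement0 (k : Type*) [Field k] :
    ∃ p : Ideal (B k), p.IsPrime ∧ p ≠ ⊥ ∧ p.comap (φ k) = ⊥ := by
  refine ⟨RingHom.ker (eval₂X (evalLoc k)), RingHom.ker_isPrime _, fun h => ?_, ?_⟩
  · have hmem := C_X_zero_sub_xInvLacunary_mem_ker k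
    rw [h, Ideal.mem_bot] at hmem
    exact C_X_zero_sub_xInvLacunary_ne_zero k hmem
  · rw [RingHom.comap_ker, eval₂X_evalLoc_comp_φ, ← RingHom.injective_iff_ker_eq_bot]
    exact eval₂X_evalLacunary_injective yDeg_strictMono (by simp [yDeg]) xPole_monotone
      exists_yDeg_xPole_gap
end

section
/- Let k be a field, A := k[w,x,z][[y]], B := k[w,x,1/x,z][[y]], φ : A → B the coefficientwise localization map, and P the ideal of A generated by the constant power series w and z. The extended ideal PB = P.map φ is a prime ideal of B. -/
/-- The ideal `P = (w, z)` of `A`, generated by the constant power series `w` and `z`. -/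
noncomputable def P (k : Type*) [Field k] : Ideal (A k) :=
  Ideal.span {PowerSeries.C (R := MvPolynomial (Fin 3) k) (MvPolynomial.X 0),
    PowerSeries.C (R := MvPolynomial (Fin 3) k) (MvPolynomial.X 2)}

/-!
The ideal `(w, z)` of `k[w,x,z]` is the kernel of the substitution `w, z ↦ 0`, hence prime, and
it misses the powers of `x`, so its extension `J` to `k[w,x,1/x,z]` is prime. Now `PB` is the
extension of `J` along `C`. Since `J` is finitely generated, a series all of whose coefficients
lie in `J` can be written as a finite combination of the generators with series coefficients, so
`PB` is the kernel of `B → (k[w,x,1/x,z] ⧸ J)⟦y⟧`, whose target is a domain.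
-/

namespace MvPolynomial

variable {σ R : Type*} [CommRing R] (s : Set σ)

variable (R) in
open Classical in
noncomputable def killVars : MvPolynomial σ R →ₐ[R] MvPolynomial σ R :=
  aeval fun i => if i ∈ s then 0 else X i

theorem killVars_X_of_mem {i : σ} (hi : i ∈ s) : killVars R s (X i) = 0 := by
  simp [killVars, hi]

theorem killVars_X_of_notMem {i : σ} (hi : i ∉ s) : killVars R s (X i) = X i := by
  simp [killVars, hi]

theorem sub_killVars_mem_span_X_image (f : MvPolynomial σ R) :
    f - killVars R s f ∈ Ideal.span (X '' s) := by
  induction f using MvPolynomial.induction_on with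
  | C a => simp [killVars]
  | add p q hp hq =>
    rw [map_add, add_sub_add_comm]
    exact Ideal.add_mem _ hp hq
  | mul_X p i hp =>
    by_cases hi : i ∈ s
    · rw [map_mul, killVars_X_of_mem s hi, mul_zero, sub_zero]
      exact Ideal.mul_mem_left _ _ (Ideal.subset_span ⟨i, hi, rfl⟩)
    · rw [map_mul, killVars_X_of_notMem s hi, ← sub_mul]
      exact Ideal.mul_mem_right _ _ hp

theorem span_X_image_eq_ker_killVars :
    Ideal.span (X '' s) = RingHom.ker (killVars R s) := by
  refine le_antisymm ?_ fun f hf => ?_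
  · rw [Ideal.span_le]
    rintro _ ⟨i, hi, rfl⟩
    exact killVars_X_of_mem s hi
  · simpa [(RingHom.mem_ker).mp hf] using sub_killVars_mem_span_X_image s f

theorem isPrime_span_X_image [IsDomain R] :
    (Ideal.span (X '' s : Set (MvPolynomial σ R))).IsPrime := by
  rw [span_X_image_eq_ker_killVars]; exact RingHom.ker_isPrime _

theorem disjoint_powers_X_span_X_image [Nontrivial R] {j : σ} (hj : j ∉ s) :
    Disjoint (Submonoid.powers (X j : MvPolynomial σ R) : Set (MvPolynomial σ R))
      (Ideal.span (X '' s : Set (MvPolynomial σ R)) : Set (MvPolynomial σ R)) := by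
  rw [Set.disjoint_left]
  rintro _ ⟨n, rfl⟩ hmem
  rw [span_X_image_eq_ker_killVars, SetLike.mem_coe, RingHom.mem_ker, map_pow,
    killVars_X_of_notMem s hj, X_pow_eq_monomial, monomial_eq_zero] at hmem
  exact one_ne_zero hmem

end MvPolynomial

namespace PowerSeries

variable {R : Type*} [CommRing R]

theorem map_C_eq_ker_map_mk {I : Ideal R} (hI : I.FG) :
    I.map C = RingHom.ker (map (Ideal.Quotient.mk I)) := by
  refine le_antisymm ?_ fun f hf => ?_
  · rw [Ideal.map_le_iff_le_comap]
    intro r hr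
    simp [RingHom.mem_ker, map_C, Ideal.Quotient.eq_zero_iff_mem.mpr hr]
  · obtain ⟨n, g, rfl⟩ := Submodule.fg_iff_exists_fin_generating_family.mp hI
    have hcoeff (m : ℕ) : coeff m f ∈ Ideal.span (Set.range g) := by
      rw [← Ideal.Quotient.eq_zero_iff_mem, ← coeff_map, (RingHom.mem_ker).mp hf, map_zero]
    choose c hc using fun m => Ideal.mem_span_range_iff_exists_fun.mp (hcoeff m)
    have hf_eq : f = ∑ i, mk (fun m => c m i) * C (g i) := by
      ext m
      simp [map_sum, coeff_mul_C, hc]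
    rw [hf_eq, Ideal.map_span]
    refine Ideal.sum_mem _ fun i _ => Ideal.mul_mem_left _ _ (Ideal.subset_span ?_)
    exact ⟨g i, Set.mem_range_self i, rfl⟩

theorem isPrime_map_C_of_fg {I : Ideal R} [I.IsPrime] (hI : I.FG) : (I.map C).IsPrime :=
  map_C_eq_ker_map_mk hI ▸ RingHom.ker_isPrime _

end PowerSeries

open MvPolynomial in
theorem map_φ_P_eq (k : Type*) [Field k] :
    (P k).map (φ k) = ((Ideal.span (X '' {0, 2})).map
      (algebraMap (MvPolynomial (Fin 3) k) (Localization.Away (X 1 : MvPolynomial (Fin 3) k)))).map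
      PowerSeries.C := by
  rw [P, Set.image_pair, ← Set.image_pair, ← Ideal.map_span, Ideal.map_map, Ideal.map_map]
  congr 1
  exact RingHom.ext fun r => by simp [φ]

open MvPolynomial in
/-- The extended ideal `PB = P.map φ` is a prime ideal of `B = k[w,x,1/x,z][[y]]`. -/
theorem statement3 (k : Type*) [Field k] : ((P k).map (φ k)).IsPrime := by
  rw [map_φ_P_eq]
  have hJ : ((Ideal.span (X '' {0, 2})).map (algebraMap (MvPolynomial (Fin 3) k)
      (Localization.Away (X 1 : MvPolynomial (Fin 3) k)))).IsPrime :=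
    IsLocalization.isPrime_of_isPrime_disjoint (Submonoid.powers (X 1)) _ _
      (isPrime_span_X_image _) (disjoint_powers_X_span_X_image _ (by decide))
  exact PowerSeries.isPrime_map_C_of_fg (Ideal.FG.map (Submodule.fg_span (Set.toFinite _)) _)
end

section
/- Let k be a field, A := k[w,x,z][[y]], and P the prime ideal of A generated by the constant power series w and z, with R := A_P. The residue field of the local ring R is isomorphic as a field to the fraction field of k[x][[y]], the power series ring in y over the one-variable polynomial ring k[x]. -/
namespace PowerSeries

variable {R S : Type*} [CommRing R] [CommRing S]

theorem mem_map_C_iff {I : Ideal R} (hI : I.FG) {f : R⟦X⟧} :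
    f ∈ I.map C ↔ ∀ n, coeff n f ∈ I := by
  constructor
  · have hle : I.map C ≤ RingHom.ker (map (Ideal.Quotient.mk I)) :=
      Ideal.map_le_iff_le_comap.mpr fun a ha ↦ by
        simp [RingHom.mem_ker, Ideal.Quotient.eq_zero_iff_mem.mpr ha]
    intro hf n
    rw [← Ideal.Quotient.eq_zero_iff_mem, ← coeff_map, RingHom.mem_ker.mp (hle hf), map_zero]
  · obtain ⟨s, rfl⟩ := hI
    intro hf
    choose c _ hc using fun n ↦ Submodule.mem_span_finset.mp (hf n)
    have hf : f = ∑ a ∈ s, mk (fun n ↦ c n a) * C a := by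
      ext n
      simp [map_sum, ← hc n, mul_comm]
    rw [hf]
    exact Ideal.sum_mem _ fun a ha ↦
      Ideal.mul_mem_left _ _ (Ideal.mem_map_of_mem _ (Ideal.subset_span ha))

theorem ker_map {g : R →+* S} (hg : (RingHom.ker g).FG) :
    RingHom.ker (map g) = (RingHom.ker g).map C := by
  ext f
  simp only [mem_map_C_iff hg, RingHom.mem_ker, ← coeff_map, PowerSeries.ext_iff, map_zero]

end PowerSeries

namespace MvPolynomial

variable (R : Type*) [CommRing R]

noncomputable def evalX1 : MvPolynomial (Fin 3) R →+* Polynomial R :=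
  (aeval fun i ↦ if i = 1 then Polynomial.X else 0).toRingHom

noncomputable def ofX1 : Polynomial R →+* MvPolynomial (Fin 3) R :=
  (Polynomial.aeval (X 1)).toRingHom

theorem evalX1_comp_ofX1 : (evalX1 R).comp (ofX1 R) = RingHom.id _ := by
  apply Polynomial.ringHom_ext <;> simp [evalX1, ofX1]

theorem evalX1_surjective : Function.Surjective (evalX1 R) :=
  fun p ↦ ⟨ofX1 R p, congr($(evalX1_comp_ofX1 R) p)⟩

theorem sub_ofX1_evalX1_mem (p : MvPolynomial (Fin 3) R) :
    p - ofX1 R (evalX1 R p) ∈ Ideal.span {X 0, X 2} := by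
  induction p using MvPolynomial.induction_on with
  | C a => simp [evalX1, ofX1]
  | add p q hp hq =>
    rw [map_add, map_add, add_sub_add_comm]
    exact Ideal.add_mem _ hp hq
  | mul_X p i hp =>
    obtain rfl | rfl | rfl : i = 0 ∨ i = 1 ∨ i = 2 := by fin_cases i <;> simp
    · simpa [evalX1, ofX1] using Ideal.mul_mem_left _ p (Ideal.subset_span (by simp))
    · have hX1 : ofX1 R (evalX1 R (X 1)) = X 1 := by simp [evalX1, ofX1]
      rw [map_mul, map_mul, hX1, ← sub_mul]
      exact Ideal.mul_mem_right _ _ hp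
    · simpa [evalX1, ofX1] using Ideal.mul_mem_left _ p (Ideal.subset_span (by simp))

theorem ker_evalX1 : RingHom.ker (evalX1 R) = Ideal.span {X 0, X 2} := by
  refine le_antisymm (fun p hp ↦ ?_) (Ideal.span_le.mpr ?_)
  · simpa [RingHom.mem_ker.mp hp] using sub_ofX1_evalX1_mem R p
  · rintro _ (rfl | rfl) <;> simp [evalX1]

end MvPolynomial

open MvPolynomial in
theorem P_eq_map_ker_evalX1 (k : Type*) [Field k] :
    P k = (RingHom.ker (evalX1 k)).map PowerSeries.C := by
  rw [ker_evalX1, Ideal.map_span, Set.image_pair, P]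

noncomputable def quotientPEquivPowerSeries (k : Type*) [Field k] :
    A k ⧸ P k ≃+* PowerSeries (Polynomial k) :=
  (Ideal.quotEquivOfEq (by
    rw [PowerSeries.ker_map (by rw [MvPolynomial.ker_evalX1]; exact Submodule.fg_span (by simp)),
      P_eq_map_ker_evalX1])).trans
  (RingHom.quotientKerEquivOfSurjective
    (PowerSeries.map_surjective _ (MvPolynomial.evalX1_surjective k)))

/-- The residue field of `R = A_P` is isomorphic to the fraction field of `k[x][[y]]`. -/
theorem statement8 (k : Type*) [Field k] [hP : (P k).IsPrime] :
    Nonempty (IsLocalRing.ResidueField (Localization.AtPrime (P k)) ≃+*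
      FractionRing (PowerSeries (Polynomial k))) :=
  -- the residue field is a fraction field of `A ⧸ P` by the instance for `Ideal.ResidueField`
  ⟨IsFractionRing.ringEquivOfRingEquiv (A := A k ⧸ P k) (quotientPEquivPowerSeries k)⟩
end

section
/- Let k be a field, A := k[w,x,z][[y]], B := k[w,x,1/x,z][[y]], φ : A → B the coefficientwise localization map, P the prime ideal of A generated by the constant power series w and z, and S := B_{PB} with PB = P.map φ. If q is a nonzero prime ideal of S whose contraction to R := A_P along the canonical local homomorphism R → S is the zero ideal, then the contraction p := q ∩ B of q along the localization map B → S is a prime ideal of B, p is nonzero, and the contraction of p to A along φ is the zero ideal. -/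
theorem IsLocalization.under_ne_bot {R S : Type*} [CommSemiring R] [CommSemiring S] [Algebra R S]
    (M : Submonoid R) [IsLocalization M S] {q : Ideal S} (hq : q ≠ ⊥) : q.under R ≠ ⊥ :=
  fun h ↦ hq <| by rw [← IsLocalization.map_under M S q, h, Ideal.map_bot]

theorem Ideal.comap_comap_eq_bot_of_comp_eq {A B R S : Type*} [Semiring A] [Semiring B]
    [Semiring R] [Semiring S] {f : A →+* B} {i : A →+* R} {g : R →+* S} {j : B →+* S}
    (hcomp : g.comp i = j.comp f) (hi : Function.Injective i) {q : Ideal S}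
    (hq : q.comap g = ⊥) : (q.comap j).comap f = ⊥ := by
  rw [Ideal.comap_comap, ← hcomp, ← Ideal.comap_comap, hq, Ideal.comap_bot_of_injective i hi]

/-- If `q` is a nonzero prime of `S = B_{PB}` contracting to `(0)` in `R = A_P`, then
`p = q ∩ B` is a nonzero prime ideal of `B` contracting to `(0)` in `A` along `φ`. -/
theorem statement13 (k : Type*) [Field k] [hP : (P k).IsPrime]
    [hPB : ((P k).map (φ k)).IsPrime]
    (hIJ : P k = ((P k).map (φ k)).comap (φ k))
    (q : Ideal (Localization.AtPrime ((P k).map (φ k)))) (hq : q.IsPrime) (hq0 : q ≠ ⊥)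
    (hcon : q.comap (Localization.localRingHom (P k) ((P k).map (φ k)) (φ k) hIJ) = ⊥) :
    (q.comap (algebraMap (B k) (Localization.AtPrime ((P k).map (φ k))))).IsPrime ∧
    q.comap (algebraMap (B k) (Localization.AtPrime ((P k).map (φ k)))) ≠ ⊥ ∧
    (q.comap (algebraMap (B k) (Localization.AtPrime ((P k).map (φ k))))).comap (φ k) = ⊥ := by
  have hinj : Function.Injective (algebraMap (A k) (Localization.AtPrime (P k))) :=
    IsLocalization.injective _ (P k).primeCompl_le_nonZeroDivisors
  exact ⟨Ideal.comap_isPrime _ q, IsLocalization.under_ne_bot ((P k).map (φ k)).primeCompl hq0,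
    Ideal.comap_comap_eq_bot_of_comp_eq (IsLocalization.map_comp _) hinj hcon⟩
end
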